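/- arXiv:2412.18861 — 2 statements merged into one kernel-verified Lean document; each statement's English description precedes it below -/
import Mathlib

section
/- Let κ ≥ 2 and let G = K_κ be the complete graph on κ vertices. Then the infimum, over all edge-weight functions ω : E(G) → ℝ with ω(e) ≥ 0 for all e and ω(G) > 0, of the weighting ratio t_ω(G) equals 2/κ. -/
open scoped Classical

noncomputable section

/-- Total weight of a graph: the sum of the weights of its edges. -/
def totalWeight {V : Type*} [Fintype V] (G : SimpleGraph V) (w : Sym2 V → ℝ) : ℝ :=
  ∑ e ∈ G.edgeFinset, w e

/-- The maximum, over all spanning trees `T` of `G` (subgraphs on the full vertex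
set that are trees), of the total weight of `T`. -/
def maxTreeWeight {V : Type*} [Fintype V] (G : SimpleGraph V) (w : Sym2 V → ℝ) : ℝ :=
  sSup {x | ∃ T : SimpleGraph V, T ≤ G ∧ T.IsTree ∧ x = ∑ e ∈ T.edgeFinset, w e}

/-!
Every star `K_{1,κ-1}` is a spanning tree of `K_κ`, and the `κ` stars together cover every
edge exactly twice, so the heaviest star weighs at least `2 ω(K_κ) / κ`; hence `t_ω ≥ 2/κ`.
The uniform weighting attains the bound: every spanning tree has `κ - 1` edges out of
`κ (κ - 1) / 2`.
-/

open Finset SimpleGraph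

variable {V : Type*} [Fintype V]

theorem SimpleGraph.sum_sum_edgeFinset_filter_mem {M : Type*} [AddCommMonoid M]
    (G : SimpleGraph V) [Fintype G.edgeSet] (w : Sym2 V → M) :
    ∑ v, ∑ e ∈ G.edgeFinset with v ∈ e, w e = 2 • ∑ e ∈ G.edgeFinset, w e := by
  simp_rw [sum_filter]
  rw [sum_comm, smul_sum]
  refine sum_congr rfl fun e he => ?_
  have hends : univ.filter (· ∈ e) = e.toFinset := by ext; simp
  rw [← sum_filter, hends, sum_const,
    Sym2.card_toFinset_of_not_isDiag e (G.not_isDiag_of_mem_edgeSet (mem_edgeFinset.mp he))]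

theorem SimpleGraph.edgeFinset_starGraph (c : V) :
    (starGraph c).edgeFinset = {e ∈ (⊤ : SimpleGraph V).edgeFinset | c ∈ e} := by
  ext e
  induction e using Sym2.ind with
  | _ a b =>
    simp only [mem_filter, mem_edgeFinset, mem_edgeSet, starGraph_adj, top_adj, Sym2.mem_iff]
    tauto

theorem sum_le_maxTreeWeight {G T : SimpleGraph V} [Fintype T.edgeSet] (w : Sym2 V → ℝ)
    (hTG : T ≤ G) (hT : T.IsTree) : ∑ e ∈ T.edgeFinset, w e ≤ maxTreeWeight G w := by
  have hbdd : BddAbove {x | ∃ T : SimpleGraph V, T ≤ G ∧ T.IsTree ∧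
      x = ∑ e ∈ T.edgeFinset, w e} := by
    refine ((Set.finite_univ (α := SimpleGraph V)).image
      fun T => ∑ e ∈ T.edgeFinset, w e).bddAbove.mono ?_
    rintro x ⟨T, -, -, rfl⟩
    exact ⟨T, trivial, rfl⟩
  exact le_csSup hbdd ⟨T, hTG, hT, by congr!⟩

theorem two_mul_totalWeight_top_le (w : Sym2 V → ℝ) :
    2 * totalWeight ⊤ w ≤ Fintype.card V * maxTreeWeight ⊤ w := calc
  2 * totalWeight ⊤ w = ∑ c, ∑ e ∈ (starGraph c).edgeFinset, w e := by
    simp only [edgeFinset_starGraph]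
    rw [sum_sum_edgeFinset_filter_mem, totalWeight, nsmul_eq_mul, Nat.cast_ofNat]
    -- the two `edgeFinset`s of `⊤` differ only in their `Fintype` instances
    congr!
  _ ≤ ∑ _c : V, maxTreeWeight ⊤ w :=
    sum_le_sum fun c _ => sum_le_maxTreeWeight w le_top (isTree_starGraph c)
  _ = Fintype.card V * maxTreeWeight ⊤ w := by rw [sum_const, card_univ, nsmul_eq_mul]

theorem maxTreeWeight_one {G : SimpleGraph V} (hG : G.Connected) :
    maxTreeWeight G (fun _ => 1) = Fintype.card V - 1 := by
  have hcard {T : SimpleGraph V} (hT : T.IsTree) :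
      ∑ e ∈ T.edgeFinset, (1 : ℝ) = Fintype.card V - 1 := by
    rw [sum_const, nsmul_one, ← hT.card_edgeFinset]
    push_cast
    ring
  obtain ⟨T, hTG, hT⟩ := hG.exists_isTree_le
  refine le_antisymm (csSup_le ⟨_, T, hTG, hT, rfl⟩ ?_) (hcard hT ▸ sum_le_maxTreeWeight _ hTG hT)
  rintro x ⟨T', -, hT', rfl⟩
  exact (hcard hT').le

theorem totalWeight_top_one :
    totalWeight (⊤ : SimpleGraph V) (fun _ => 1) = (Fintype.card V).choose 2 := by
  rw [totalWeight, sum_const, nsmul_one, ← card_edgeFinset_top_eq_card_choose_two]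
  congr!

/-- For the complete graph `K_κ` with `κ ≥ 2`, the infimum of the weighting ratio
`t_w(K_κ)` over all nonnegative edge-weight functions with positive total weight
equals `2/κ`. -/
theorem complete_graph_ratio (κ : ℕ) (hκ : 2 ≤ κ) :
    IsGLB
      {x | ∃ w : Sym2 (Fin κ) → ℝ,
        (∀ e ∈ (⊤ : SimpleGraph (Fin κ)).edgeFinset, 0 ≤ w e) ∧
        0 < totalWeight (⊤ : SimpleGraph (Fin κ)) w ∧
        x = maxTreeWeight (⊤ : SimpleGraph (Fin κ)) w /
              totalWeight (⊤ : SimpleGraph (Fin κ)) w}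
      (2 / (κ : ℝ)) := by
  have hκR : (2 : ℝ) ≤ κ := by exact_mod_cast hκ
  constructor
  · rintro x ⟨w, -, hpos, rfl⟩
    have hstars := two_mul_totalWeight_top_le w
    rw [Fintype.card_fin] at hstars
    rw [le_div_iff₀ hpos, div_mul_eq_mul_div, div_le_iff₀ (by positivity)]
    linarith
  · intro b hb
    have : Nonempty (Fin κ) := ⟨⟨0, by omega⟩⟩
    have hM := maxTreeWeight_one (connected_top (V := Fin κ))
    have hT := totalWeight_top_one (V := Fin κ)
    rw [Fintype.card_fin] at hM hT
    rw [Nat.cast_choose_two] at hT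
    refine hb ⟨fun _ => 1, fun _ _ => zero_le_one, by rw [hT]; nlinarith, ?_⟩
    have hκ1 : (κ : ℝ) - 1 ≠ 0 := by linarith
    rw [hM, hT]
    field_simp
end
end

section
/- Let G be a finite simple connected chordal graph with at least two vertices and let s be the clique number of G. Then there exists S ∈ Co(G) attaining the minimum of (|S'| − 1)/e(G[S']) over all S' ∈ Co(G) such that every vertex of the induced subgraph G[S] has degree at least s/2 in G[S]. -/
/-!
Take `S` minimising `(|S| - 1) / e(G[S])` over `Co(G)` and, among the minimisers, of least size.
An `s`-clique has ratio `(s - 1) / (s choose 2) = 2 / s`, so `s (|S| - 1) ≤ 2 e(G[S])`.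
If `v` were a cut vertex of `G[S]`, then `S` would be the union of two members of `Co(G)` meeting
only in `v`, whose numerators and edge counts add up to those of `S`; by the mediant inequality
one of them would be a smaller minimiser. Hence `S - v ∈ Co(G)` (unless `|S| = 2`), and
comparing the ratios of `S` and `S - v` gives `e(G[S]) ≤ (|S| - 1) deg_S v`, so `s ≤ 2 deg_S v`.
-/

open scoped Classical

noncomputable section

/-- A simple graph is chordal if it has no induced cycle of length at least 4. -/
def IsChordal {V : Type*} (G : SimpleGraph V) : Prop :=
  ∀ n : ℕ, 4 ≤ n → IsEmpty (SimpleGraph.cycleGraph n ↪g G)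

/-- The number of edges of the induced subgraph `G[S]`, i.e. the number of edges of
`G` with both endpoints in `S`. -/
def inducedEdgeCount {V : Type*} [Fintype V] (G : SimpleGraph V) (S : Finset V) : ℕ :=
  (G.edgeFinset.filter (fun e => ∀ v ∈ e, v ∈ S)).card

lemma min_div_le_add_div_add {K : Type*} [Field K] [LinearOrder K] [IsStrictOrderedRing K]
    {a b c d : K} (hc : 0 < c) (hd : 0 < d) : min (a / c) (b / d) ≤ (a + b) / (c + d) := by
  rcases le_total (a / c) (b / d) with h | h
  · rw [div_le_div_iff₀ hc hd] at h
    exact (min_le_left _ _).trans <| by rw [div_le_div_iff₀ hc (by positivity)]; nlinarith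
  · rw [div_le_div_iff₀ hd hc] at h
    exact (min_le_right _ _).trans <| by rw [div_le_div_iff₀ hd (by positivity)]; nlinarith

namespace SimpleGraph

open Finset

section

variable {V : Type*} {G : SimpleGraph V}

lemma reachable_induce_of_walk {S A : Set V} {v : V}
    (hA : ∀ x ∈ A, x ≠ v → ∀ y ∈ S, G.Adj x y → y ∈ A) (hvA : v ∈ A) {x : V} (p : G.Walk x v)
    (hp : ∀ w ∈ p.support, w ∈ S) (hx : x ∈ A) :
    (G.induce A).Reachable ⟨x, hx⟩ ⟨v, hvA⟩ := by
  induction p with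
  | nil => rfl
  | @cons x y v hxy q ih =>
    obtain rfl | hxv := eq_or_ne x v
    · rfl
    have hy : y ∈ A := hA x hx hxv y (hp y (by simp)) hxy
    exact (Adj.reachable (G := G.induce A) (u := ⟨x, hx⟩) (v := ⟨y, hy⟩) hxy).trans
      (ih hA hvA (fun w hw => hp w (List.mem_cons_of_mem _ hw)) hy)

lemma connected_induce_of_closed {S A : Set V} {v : V} (hS : (G.induce S).Connected)
    (hAS : A ⊆ S) (hvA : v ∈ A) (hA : ∀ x ∈ A, x ≠ v → ∀ y ∈ S, G.Adj x y → y ∈ A) :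
    (G.induce A).Connected := by
  rw [connected_iff_exists_forall_reachable]
  refine ⟨⟨v, hvA⟩, fun ⟨x, hx⟩ => ?_⟩
  obtain ⟨p⟩ := hS.preconnected ⟨x, hAS hx⟩ ⟨v, hAS hvA⟩
  refine (reachable_induce_of_walk hA hvA (p.map (Embedding.induce S).toHom)
    (fun w hw => ?_) hx).symm
  obtain ⟨w, -, rfl⟩ := List.mem_map.mp (Walk.support_map _ p ▸ hw)
  exact w.2

lemma exists_closed_of_not_connected_induce {T : Finset V} (hT : T.Nonempty)
    (h : ¬(G.induce (T : Set V)).Connected) :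
    ∃ A ⊆ T, A.Nonempty ∧ (T \ A).Nonempty ∧ ∀ x ∈ A, ∀ y ∈ T, G.Adj x y → y ∈ A := by
  have : Nonempty (T : Set V) := hT.coe_sort
  obtain ⟨⟨a, ha⟩, ⟨b, hb⟩, hab⟩ : ∃ a b, ¬(G.induce (T : Set V)).Reachable a b := by
    simpa [connected_iff, Preconnected] using h
  refine ⟨{x ∈ T | ∃ hx : x ∈ T, (G.induce (T : Set V)).Reachable ⟨a, ha⟩ ⟨x, hx⟩},
    filter_subset _ _, ⟨a, mem_filter.mpr ⟨ha, ha, .rfl⟩⟩,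
    ⟨b, mem_sdiff.mpr ⟨hb, fun h => hab (mem_filter.mp h).2.2⟩⟩, ?_⟩
  intro x hx y hy hxy
  obtain ⟨hxT, _, hax⟩ := mem_filter.mp hx
  exact mem_filter.mpr ⟨hy, hy,
    hax.trans (Adj.reachable (G := G.induce (T : Set V)) (u := ⟨x, hxT⟩) (v := ⟨y, hy⟩) hxy)⟩

/-- The family `Co(G)` of the paper. -/
def connectedSets (G : SimpleGraph V) : Set (Finset V) :=
  {S | 2 ≤ #S ∧ (G.induce (S : Set V)).Connected}

lemma IsNClique.mem_connectedSets {k : ℕ} {K : Finset V} (hK : G.IsNClique k K) (hk : 2 ≤ k) :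
    K ∈ connectedSets G := by
  refine ⟨hK.card_eq ▸ hk, ?_⟩
  have : Nonempty (K : Set V) := (card_pos.mp (by rw [hK.card_eq]; omega)).coe_sort
  rw [induce_eq_top.mpr hK.isClique]
  exact connected_top

end

variable {V : Type*} [Fintype V] {G : SimpleGraph V}

lemma inducedEdgeCount_eq_card_edgeFinset_induce (S : Finset V) :
    inducedEdgeCount G S = #(G.induce (S : Set V)).edgeFinset := by
  rw [← card_filter_edgeFinset_toFinset_subset, inducedEdgeCount]
  congr! 2 with e
  simp [Finset.subset_iff]

lemma Connected.card_le_inducedEdgeCount_add_one {S : Finset V}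
    (hS : (G.induce (S : Set V)).Connected) : #S ≤ inducedEdgeCount G S + 1 := by
  have := hS.card_vert_le_card_edgeSet_add_one
  rwa [Nat.card_coe_set_eq, Set.ncard_coe_finset, Nat.card_eq_fintype_card, card_edgeSet,
    ← inducedEdgeCount_eq_card_edgeFinset_induce] at this

lemma inducedEdgeCount_pos {S : Finset V} (hS : S ∈ connectedSets G) :
    0 < inducedEdgeCount G S := by
  have := hS.2.card_le_inducedEdgeCount_add_one
  have := hS.1
  omega

lemma inducedEdgeCount_eq_zero_of_card_le_one {S : Finset V} (hS : #S ≤ 1) :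
    inducedEdgeCount G S = 0 := by
  refine card_eq_zero.mpr <| filter_eq_empty_iff.mpr fun e he hS' => ?_
  induction e with
  | h x y =>
    exact (mem_edgeFinset.mp he).ne (card_le_one.mp hS x (hS' x (by simp)) y (hS' y (by simp)))

lemma inducedEdgeCount_union_add_inter {S₁ S₂ : Finset V}
    (hcross : ∀ x ∈ S₁, ∀ y ∈ S₂, G.Adj x y → x ∈ S₂ ∨ y ∈ S₁) :
    inducedEdgeCount G (S₁ ∪ S₂) + inducedEdgeCount G (S₁ ∩ S₂) =
      inducedEdgeCount G S₁ + inducedEdgeCount G S₂ := by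
  have hunion : G.edgeFinset.filter (fun e => ∀ v ∈ e, v ∈ S₁ ∪ S₂) =
      G.edgeFinset.filter (fun e => (∀ v ∈ e, v ∈ S₁) ∨ ∀ v ∈ e, v ∈ S₂) := by
    refine filter_congr fun e he => ?_
    induction e with
    | h x y =>
      have hxy : G.Adj x y := mem_edgeFinset.mp he
      simp only [Sym2.mem_iff, forall_eq_or_imp, forall_eq, mem_union]
      have := hcross x
      have := hcross y
      grind [G.adj_symm]
  have hinter : G.edgeFinset.filter (fun e => ∀ v ∈ e, v ∈ S₁ ∩ S₂) =
      G.edgeFinset.filter (fun e => (∀ v ∈ e, v ∈ S₁) ∧ ∀ v ∈ e, v ∈ S₂) :=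
    filter_congr fun e _ => by simp only [mem_inter, forall_and]
  rw [inducedEdgeCount, inducedEdgeCount, hunion, hinter, filter_or, filter_and,
    card_union_add_card_inter, inducedEdgeCount, inducedEdgeCount]

lemma inducedEdgeCount_insert_add_sdiff {S A : Finset V} {v : V} (hv : v ∈ S) (hvA : v ∉ A)
    (hAS : A ⊆ S) (hA : ∀ x ∈ A, ∀ y ∈ S, G.Adj x y → y ∈ insert v A) :
    inducedEdgeCount G (insert v A) + inducedEdgeCount G (S \ A) = inducedEdgeCount G S := by
  have hunion : insert v A ∪ (S \ A) = S := by
    ext x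
    simp only [mem_union, mem_insert, mem_sdiff]
    grind
  have hinter : insert v A ∩ (S \ A) = {v} := by
    ext x
    simp only [mem_inter, mem_insert, mem_sdiff, mem_singleton]
    grind
  have := inducedEdgeCount_union_add_inter (G := G) (S₁ := insert v A) (S₂ := S \ A)
    fun x hx y hy hxy => ?_
  · rwa [hunion, hinter, inducedEdgeCount_eq_zero_of_card_le_one (card_singleton v).le,
      add_zero, eq_comm] at this
  obtain rfl | hxA := mem_insert.mp hx
  · exact .inl (mem_sdiff.mpr ⟨hv, hvA⟩)
  · exact .inr (hA x hxA y (mem_sdiff.mp hy).1 hxy)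

lemma inducedEdgeCount_eq_erase_add (S : Finset V) {v : V} (hv : v ∈ S) :
    inducedEdgeCount G S = inducedEdgeCount G (S.erase v) + #{u ∈ S | G.Adj v u} := by
  have hoff : {e ∈ G.edgeFinset | (∀ w ∈ e, w ∈ S) ∧ v ∉ e} =
      {e ∈ G.edgeFinset | ∀ w ∈ e, w ∈ S.erase v} :=
    filter_congr fun e _ => by
      simp only [mem_erase]
      exact ⟨fun ⟨hS, hve⟩ w hw => ⟨ne_of_mem_of_not_mem hw hve, hS w hw⟩,
        fun h => ⟨fun w hw => (h w hw).2, fun hve => (h v hve).1 rfl⟩⟩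
  have hon : {e ∈ G.edgeFinset | (∀ w ∈ e, w ∈ S) ∧ v ∈ e} =
      {u ∈ S | G.Adj v u}.map (Sym2.mkEmbedding v) := by
    ext e
    induction e with
    | h x y =>
      simp only [mem_filter, mem_map, mem_edgeFinset, mem_edgeSet, Sym2.mem_iff, forall_eq_or_imp,
        forall_eq, Sym2.mkEmbedding_apply]
      constructor
      · rintro ⟨hxy, ⟨hx, hy⟩, rfl | rfl⟩
        · exact ⟨y, ⟨hy, hxy⟩, rfl⟩
        · exact ⟨x, ⟨hx, hxy.symm⟩, Sym2.eq_swap⟩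
      · rintro ⟨a, ⟨ha, hva⟩, h⟩
        rcases Sym2.eq_iff.mp h with ⟨rfl, rfl⟩ | ⟨rfl, rfl⟩
        · exact ⟨hva, ⟨hv, ha⟩, .inl rfl⟩
        · exact ⟨hva.symm, ⟨ha, hv⟩, .inr rfl⟩
  rw [inducedEdgeCount, ← card_filter_add_card_filter_not (p := fun e => v ∈ e), filter_filter,
    filter_filter, hoff, hon, card_map, inducedEdgeCount, add_comm]

lemma IsNClique.choose_two_le_inducedEdgeCount {k : ℕ} {K : Finset V} (hK : G.IsNClique k K) :
    k.choose 2 ≤ inducedEdgeCount G K := by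
  rw [← hK.card_eq, ← Sym2.card_image_offDiag]
  refine card_le_card fun e he => ?_
  obtain ⟨⟨x, y⟩, hxy, rfl⟩ := mem_image.mp he
  obtain ⟨hx, hy, hne⟩ := mem_offDiag.mp hxy
  simp [hK.isClique hx hy hne, hx, hy]

lemma exists_split_of_not_connected_induce_erase {S : Finset V} {v : V}
    (hS : (G.induce (S : Set V)).Connected) (hv : v ∈ S) (hne : (S.erase v).Nonempty)
    (hcut : ¬(G.induce ((S.erase v : Finset V) : Set V)).Connected) :
    ∃ S₁ ∈ connectedSets G, ∃ S₂ ∈ connectedSets G, #S₁ + #S₂ = #S + 1 ∧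
      inducedEdgeCount G S₁ + inducedEdgeCount G S₂ = inducedEdgeCount G S := by
  obtain ⟨A, hAv, hA, hB, hAclosed⟩ := exists_closed_of_not_connected_induce hne hcut
  have hvA : v ∉ A := fun h => (mem_erase.mp (hAv h)).1 rfl
  have hAS : A ⊆ S := hAv.trans (erase_subset v S)
  have hclosed : ∀ x ∈ A, ∀ y ∈ S, G.Adj x y → y ∈ insert v A := by
    intro x hx y hy hxy
    obtain rfl | hyv := eq_or_ne y v
    · exact mem_insert_self y A
    · exact mem_insert_of_mem (hAclosed x hx y (mem_erase.mpr ⟨hyv, hy⟩) hxy)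
  have hcard₁ : #(insert v A) = #A + 1 := card_insert_of_notMem hvA
  have hcard₂ : #(S \ A) = #S - #A := card_sdiff_of_subset hAS
  have hcardA : #((S.erase v) \ A) + #A = #S - 1 := by
    rw [card_sdiff_add_card_eq_card hAv, card_erase_of_mem hv]
  have := hB.card_pos
  have := hA.card_pos
  refine ⟨insert v A, ⟨by omega, ?_⟩, S \ A, ⟨by omega, ?_⟩, by omega, ?_⟩
  · refine connected_induce_of_closed hS (coe_subset.mpr (insert_subset hv hAS))
      (mem_insert_self v A) fun x hx hxv y hy hxy => ?_
    exact hclosed x ((mem_insert.mp hx).resolve_left hxv) y hy hxy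
  · refine connected_induce_of_closed hS (by simp) (mem_sdiff.mpr ⟨hv, hvA⟩)
      fun x hx hxv y hy hxy => mem_sdiff.mpr ⟨hy, fun hyA => ?_⟩
    obtain ⟨hxS, hxA⟩ := mem_sdiff.mp hx
    exact hxA (hAclosed y hyA x (mem_erase.mpr ⟨hxv, hxS⟩) hxy.symm)
  · exact inducedEdgeCount_insert_add_sdiff hv hvA hAS hclosed

def edgeRatio (G : SimpleGraph V) (S : Finset V) : ℝ :=
  ((#S : ℝ) - 1) / inducedEdgeCount G S

lemma IsNClique.edgeRatio_le {k : ℕ} {K : Finset V} (hK : G.IsNClique k K) (hk : 2 ≤ k) :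
    edgeRatio G K ≤ 2 / k := by
  have he : ((k.choose 2 : ℕ) : ℝ) ≤ inducedEdgeCount G K := by
    exact_mod_cast hK.choose_two_le_inducedEdgeCount
  rw [Nat.cast_choose_two] at he
  have hk' : (2 : ℝ) ≤ k := by exact_mod_cast hk
  rw [edgeRatio, hK.card_eq, div_le_div_iff₀ (by nlinarith) (by linarith)]
  nlinarith

structure IsSmallestRatioMinimizer (G : SimpleGraph V) (S : Finset V) : Prop where
  mem : S ∈ connectedSets G
  le : ∀ T ∈ connectedSets G, edgeRatio G S ≤ edgeRatio G T
  card_le : ∀ T ∈ connectedSets G, edgeRatio G T ≤ edgeRatio G S → #S ≤ #T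

lemma exists_isSmallestRatioMinimizer (h : (connectedSets G).Nonempty) :
    ∃ S, IsSmallestRatioMinimizer G S := by
  obtain ⟨S, hS, hmin⟩ := (connectedSets G).exists_min_image
    (fun T => toLex (edgeRatio G T, #T)) (Set.toFinite _) h
  refine ⟨S, hS, fun T hT => (Prod.Lex.toLex_le_toLex'.mp (hmin T hT)).1, fun T hT hle => ?_⟩
  obtain ⟨hge, hcard⟩ := Prod.Lex.toLex_le_toLex'.mp (hmin T hT)
  exact hcard (le_antisymm hge hle)

namespace IsSmallestRatioMinimizer

variable {S : Finset V} {v : V}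

lemma connected_induce_erase (hS : IsSmallestRatioMinimizer G S) (hv : v ∈ S) (h3 : 3 ≤ #S) :
    (G.induce ((S.erase v : Finset V) : Set V)).Connected := by
  by_contra hcut
  have hne : (S.erase v).Nonempty := by rw [← card_pos, card_erase_of_mem hv]; omega
  obtain ⟨S₁, h₁, S₂, h₂, hcard, hedge⟩ :=
    exists_split_of_not_connected_induce_erase hS.mem.2 hv hne hcut
  have hsplit : edgeRatio G S = ((#S₁ - 1) + (#S₂ - 1)) /
      ((inducedEdgeCount G S₁ : ℝ) + inducedEdgeCount G S₂) := by
    have : (#S₁ : ℝ) + #S₂ = #S + 1 := by exact_mod_cast hcard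
    rw [edgeRatio, ← hedge, Nat.cast_add]
    congr 1
    linarith
  have hmed := min_div_le_add_div_add (a := (#S₁ : ℝ) - 1) (b := (#S₂ : ℝ) - 1)
    (Nat.cast_pos.mpr (inducedEdgeCount_pos h₁)) (Nat.cast_pos.mpr (inducedEdgeCount_pos h₂))
  rw [← hsplit] at hmed
  have := h₁.1
  have := h₂.1
  rcases min_le_iff.mp hmed with h | h
  · have := hS.card_le S₁ h₁ h
    omega
  · have := hS.card_le S₂ h₂ h
    omega

lemma inducedEdgeCount_le_mul_degree (hS : IsSmallestRatioMinimizer G S) (hv : v ∈ S) :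
    (inducedEdgeCount G S : ℝ) ≤ (#S - 1) * #{u ∈ S | G.Adj v u} := by
  have herase : (inducedEdgeCount G S : ℝ) =
      inducedEdgeCount G (S.erase v) + #{u ∈ S | G.Adj v u} := by
    exact_mod_cast inducedEdgeCount_eq_erase_add S hv
  have hcard := card_erase_of_mem hv
  obtain h2 | h3 : #S = 2 ∨ 3 ≤ #S := by have := hS.mem.1; omega
  · rw [herase, inducedEdgeCount_eq_zero_of_card_le_one (by omega), h2]
    norm_num
  · have hmem : S.erase v ∈ connectedSets G := ⟨by omega, hS.connected_induce_erase hv h3⟩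
    have hle := hS.le _ hmem
    have hn : (#(S.erase v) : ℝ) = #S - 1 := by
      rw [hcard, Nat.cast_sub (by omega)]
      norm_num
    rw [edgeRatio, edgeRatio, hn, div_le_div_iff₀ (Nat.cast_pos.mpr (inducedEdgeCount_pos hS.mem))
      (Nat.cast_pos.mpr (inducedEdgeCount_pos hmem))] at hle
    nlinarith

lemma le_two_mul_degree (hS : IsSmallestRatioMinimizer G S) {k : ℕ} {K : Finset V}
    (hK : G.IsNClique k K) (hk : 2 ≤ k) (hv : v ∈ S) :
    (k : ℝ) ≤ 2 * #{u ∈ S | G.Adj v u} := by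
  have hratio := (hS.le K (hK.mem_connectedSets hk)).trans (hK.edgeRatio_le hk)
  have hdeg := hS.inducedEdgeCount_le_mul_degree hv
  have hn : (2 : ℝ) ≤ #S := by exact_mod_cast hS.mem.1
  have hk' : (2 : ℝ) ≤ k := by exact_mod_cast hk
  rw [edgeRatio, div_le_div_iff₀ (Nat.cast_pos.mpr (inducedEdgeCount_pos hS.mem)) (by linarith)]
    at hratio
  nlinarith

end IsSmallestRatioMinimizer

end SimpleGraph

theorem chordal_min_degree_general {V : Type*} [Fintype V] (G : SimpleGraph V)
    (hG : G.Connected) (hV : 2 ≤ Fintype.card V) (s : ℕ)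
    (hclique : ∃ K : Finset V, G.IsNClique s K) :
    ∃ S : Finset V, 2 ≤ S.card ∧ (G.induce (S : Set V)).Connected ∧
      (∀ S' : Finset V, 2 ≤ S'.card → (G.induce (S' : Set V)).Connected →
        ((S.card : ℝ) - 1) / (inducedEdgeCount G S : ℝ) ≤
          ((S'.card : ℝ) - 1) / (inducedEdgeCount G S' : ℝ)) ∧
      (∀ v ∈ S, (s : ℝ) / 2 ≤ ((S.filter (fun u => G.Adj v u)).card : ℝ)) := by
  have : Nontrivial V := Fintype.one_lt_card_iff_nontrivial.mp hV
  obtain ⟨x⟩ : Nonempty V := inferInstance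
  obtain ⟨y, hxy⟩ := hG.preconnected.exists_adj_of_nontrivial x
  have hedge : G.IsNClique 2 {x, y} :=
    ⟨by rw [Finset.coe_pair]; exact SimpleGraph.isClique_pair.mpr fun _ => hxy,
      Finset.card_pair hxy.ne⟩
  obtain ⟨S, hS⟩ := SimpleGraph.exists_isSmallestRatioMinimizer ⟨_, hedge.mem_connectedSets le_rfl⟩
  refine ⟨S, hS.mem.1, hS.mem.2, fun T h2 hT => hS.le T ⟨h2, hT⟩, fun v hv => ?_⟩
  obtain ⟨K, hK⟩ := hclique
  have h2 := hS.le_two_mul_degree hedge le_rfl hv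
  rcases le_or_gt 2 s with hs | hs
  · linarith [hS.le_two_mul_degree hK hs hv]
  · have : (s : ℝ) ≤ 1 := by exact_mod_cast Nat.lt_succ_iff.mp hs
    push_cast at h2
    linarith

/-- For a connected chordal graph `G` with at least two vertices and clique number `s`,
some `S ∈ Co(G)` attaining the minimum of `(|S'| - 1)/e(G[S'])` over `S' ∈ Co(G)`
has all degrees in the induced subgraph `G[S]` at least `s/2`. -/
theorem chordal_min_degree {V : Type*} [Fintype V] (G : SimpleGraph V)
    (hG : G.Connected) (hV : 2 ≤ Fintype.card V)
    (hch : IsChordal G) (s : ℕ)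
    (hclique : ∃ K : Finset V, G.IsNClique s K) (hfree : G.CliqueFree (s + 1)) :
    ∃ S : Finset V, 2 ≤ S.card ∧ (G.induce (S : Set V)).Connected ∧
      (∀ S' : Finset V, 2 ≤ S'.card → (G.induce (S' : Set V)).Connected →
        ((S.card : ℝ) - 1) / (inducedEdgeCount G S : ℝ) ≤
          ((S'.card : ℝ) - 1) / (inducedEdgeCount G S' : ℝ)) ∧
      (∀ v ∈ S, (s : ℝ) / 2 ≤ ((S.filter (fun u => G.Adj v u)).card : ℝ)) :=
  chordal_min_degree_general G hG hV s hclique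
end
end
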